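/- The uplink-downlink power iteration map p ↦ Γ t(p), where t_i(p) = min over unit-norm ŵ of (ŵ^H Q_i(p) ŵ)/(ŵ^H R_i ŵ) and Q_i(p) = ∑_{t≠i} p_t R_t + σ_i² I, is monotone: if p ⪯ p' componentwise (with all entries nonnegative), then Γ t(p) ⪯ Γ t(p') componentwise. -/

import Mathlib

open Matrix ComplexOrder BigOperators

/-- The dual-uplink interference map `t_i(p)`: the minimum (infimum) over unit-norm
vectors `v` of the Rayleigh quotient `(vᴴ Q_i(p) v) / (vᴴ R_i v)`, where
`Q_i(p) = ∑_{t ≠ i} p_t R_t + σ_i² I`. -/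
noncomputable def tmap {M U : ℕ} (R : Fin U → Matrix (Fin M) (Fin M) ℂ)
    (σsq : Fin U → ℝ) (i : Fin U) (p : Fin U → ℝ) : ℝ :=
  sInf {x : ℝ | ∃ v : Fin M → ℂ, star v ⬝ᵥ v = 1 ∧
    x = (star v ⬝ᵥ ((∑ t ∈ Finset.univ.erase i, (p t : ℂ) • R t)
          + (σsq i : ℂ) • (1 : Matrix (Fin M) (Fin M) ℂ)).mulVec v).re
        / (star v ⬝ᵥ (R i).mulVec v).re}

/-! Since every `R_t` is positive semidefinite, `Q_i(p) ⪯ Q_i(p')` in the Loewner order whenever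
`p ≤ p'`, so each Rayleigh quotient `vᴴ Q_i(p) v / vᴴ R_i v` grows pointwise in `p`. For `p ≥ 0`
these quotients are nonnegative, so `t_i(p)` is the infimum of a set bounded below (not the junk
value of `sInf`) and inherits the monotonicity; multiplying by `γ_i > 0` preserves it. -/

open scoped MatrixOrder

section Rayleigh

variable {n 𝕜 : Type*} [Fintype n] [RCLike 𝕜]

theorem Matrix.re_dotProduct_mulVec_mono {A B : Matrix n n 𝕜} (hAB : A ≤ B) (v : n → 𝕜) :
    RCLike.re (star v ⬝ᵥ (A *ᵥ v)) ≤ RCLike.re (star v ⬝ᵥ (B *ᵥ v)) := by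
  have h := (le_iff.mp hAB).re_dotProduct_nonneg v
  rw [sub_mulVec, dotProduct_sub, map_sub] at h
  linarith

noncomputable def rayleighInf (A C : Matrix n n 𝕜) : ℝ :=
  ⨅ v : {v : n → 𝕜 // star v ⬝ᵥ v = 1},
    RCLike.re (star v.1 ⬝ᵥ (A *ᵥ v.1)) / RCLike.re (star v.1 ⬝ᵥ (C *ᵥ v.1))

theorem rayleighInf_mono {A B C : Matrix n n 𝕜} (hA : 0 ≤ A) (hAB : A ≤ B) (hC : 0 ≤ C) :
    rayleighInf A C ≤ rayleighInf B C := by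
  rw [nonneg_iff_posSemidef] at hA hC
  refine ciInf_mono ⟨0, Set.forall_mem_range.2 fun v => ?_⟩ fun v => ?_
  · exact div_nonneg (hA.re_dotProduct_nonneg v) (hC.re_dotProduct_nonneg v)
  · exact div_le_div_of_nonneg_right (re_dotProduct_mulVec_mono hAB v)
      (hC.re_dotProduct_nonneg v)

end Rayleigh

section Interference

variable {n ι : Type*} [DecidableEq n] [Fintype ι] [DecidableEq ι]
  {R : ι → Matrix n n ℂ} {σsq : ι → ℝ} {i : ι} {p p' : ι → ℝ}

variable (R σsq i p) in
noncomputable def interferenceMatrix : Matrix n n ℂ :=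
  ∑ t ∈ Finset.univ.erase i, (p t : ℂ) • R t + (σsq i : ℂ) • 1

theorem interferenceMatrix_nonneg (hR : ∀ t, 0 ≤ R t) (hσ : 0 ≤ σsq i) (hp : 0 ≤ p) :
    0 ≤ interferenceMatrix R σsq i p := by
  simp only [nonneg_iff_posSemidef] at hR ⊢
  exact (posSemidef_sum _ fun t _ => (hR t).smul (Complex.zero_le_real.2 (hp t))).add
    (PosSemidef.one.smul (Complex.zero_le_real.2 hσ))

theorem interferenceMatrix_mono (hR : ∀ t, 0 ≤ R t) (hpp' : p ≤ p') :
    interferenceMatrix R σsq i p ≤ interferenceMatrix R σsq i p' := by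
  have h : interferenceMatrix R σsq i p' - interferenceMatrix R σsq i p
      = ∑ t ∈ Finset.univ.erase i, ((p' t - p t : ℝ) : ℂ) • R t := by
    simp only [interferenceMatrix, add_sub_add_right_eq_sub, ← Finset.sum_sub_distrib,
      ← sub_smul, Complex.ofReal_sub]
  simp only [nonneg_iff_posSemidef] at hR
  rw [le_iff, h]
  exact posSemidef_sum _ fun t _ => (hR t).smul (Complex.zero_le_real.2 (sub_nonneg.2 (hpp' t)))

end Interference

theorem tmap_eq_rayleighInf {M U : ℕ} (R : Fin U → Matrix (Fin M) (Fin M) ℂ)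
    (σsq : Fin U → ℝ) (i : Fin U) (p : Fin U → ℝ) :
    tmap R σsq i p = rayleighInf (interferenceMatrix R σsq i p) (R i) := by
  simp only [tmap, rayleighInf, iInf, interferenceMatrix, RCLike.re_to_complex]
  congr 1
  ext x
  simp [eq_comm]

theorem stmt_18_general (M U : ℕ) (R : Fin U → Matrix (Fin M) (Fin M) ℂ)
    (hR : ∀ i, (R i).PosSemidef)
    (σsq : Fin U → ℝ) (hσ : ∀ i, 0 < σsq i)
    (γ : Fin U → ℝ) (hγ : ∀ i, 0 < γ i)
    (p p' : Fin U → ℝ) (hp : ∀ i, 0 ≤ p i) (hpp' : ∀ i, p i ≤ p' i) :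
    ∀ i, γ i * tmap R σsq i p ≤ γ i * tmap R σsq i p' := by
  intro i
  have hR' : ∀ t, 0 ≤ R t := fun t => (hR t).nonneg
  rw [tmap_eq_rayleighInf, tmap_eq_rayleighInf]
  exact mul_le_mul_of_nonneg_left
    (rayleighInf_mono (interferenceMatrix_nonneg hR' (hσ i).le hp)
      (interferenceMatrix_mono hR' hpp') (hR' i))
    (hγ i).le

theorem stmt_18 (M U : ℕ) (R : Fin U → Matrix (Fin M) (Fin M) ℂ)
    (hR : ∀ i, (R i).PosSemidef) (hR0 : ∀ i, R i ≠ 0)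
    (σsq : Fin U → ℝ) (hσ : ∀ i, 0 < σsq i)
    (γ : Fin U → ℝ) (hγ : ∀ i, 0 < γ i)
    (p p' : Fin U → ℝ) (hp : ∀ i, 0 ≤ p i) (hpp' : ∀ i, p i ≤ p' i) :
    ∀ i, γ i * tmap R σsq i p ≤ γ i * tmap R σsq i p' :=
  stmt_18_general M U R hR σsq hσ γ hγ p p' hp hpp'
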